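/- Fix δ > 0 and assume the data x_1,...,x_n contain more than G + ⌈n π_max⌉ distinct points. If (θ_m) is a sequence in the RIMLE constrained parameter space Θ (eigenratio bound γ and estimated noise proportion (1/n)Σ_i τ_0(x_i,θ) ≤ π_max) with some covariance eigenvalue λ_{k,j,m} ↘ 0, then the improper pseudo-log-likelihood l_n(θ_m) = (1/n)Σ_i log(π_{0,m}δ + Σ_j π_{j,m} φ(x_i; μ_{j,m}, Σ_{j,m})) → -∞. -/

import Mathlib

/-
Every eigenvalue of every covariance of `θ` lies in `[t, γ t]` with `t = λ_min(θ) → 0`, so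
`φ(x; μ_j, Σ_j) ≤ (2π t)^(-p/2)` everywhere and `≤ (2π t)^(-p/2) exp(-ε²/(2γt))` at distance
`≥ ε` from `μ_j`. Taking `ε` half the minimal gap between distinct data points, each ball
`B(μ_j, ε)` holds at most one distinct data point, so more than `n π_max` observations are far from
all means. There `ψ_δ ≤ π₀δ + s` with `s` the tail bound, and the noise constraint
`Σ_i τ₀(x_i, θ) ≤ n π_max` forces `π₀δ ≤ n π_max s`. Hence those observations contribute
`log ψ_δ ≲ -ε²/(2γt)`, which beats the growth `O(log(1/t))` of the remaining terms.
-/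

open Real Matrix Filter Topology MeasureTheory

/-- smallest eigenvalue (infimum of the spectrum) of a real matrix -/
noncomputable def lamMin {p : ℕ} (A : Matrix (Fin p) (Fin p) ℝ) : ℝ := sInf (spectrum ℝ A)

/-- largest eigenvalue (supremum of the spectrum) of a real matrix -/
noncomputable def lamMax {p : ℕ} (A : Matrix (Fin p) (Fin p) ℝ) : ℝ := sSup (spectrum ℝ A)

/-- The `p`-dimensional Gaussian density with mean `μ` and covariance matrix `S`. -/
noncomputable def gauss {p : ℕ} (x μ : Fin p → ℝ) (S : Matrix (Fin p) (Fin p) ℝ) : ℝ :=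
  (2 * π) ^ (-(p : ℝ) / 2) * S.det ^ (-(1 : ℝ) / 2) *
    Real.exp (-((x - μ) ⬝ᵥ (S⁻¹ *ᵥ (x - μ))) / 2)

/-- parameter vector θ = (π₀, (π_j), (μ_j), (Σ_j)) of a Gaussian mixture with
improper uniform (noise) component -/
abbrev Param (p G : ℕ) :=
  ℝ × (Fin G → ℝ) × (Fin G → (Fin p → ℝ)) × (Fin G → Matrix (Fin p) (Fin p) ℝ)

/-- noise proportion π₀ -/
def pi0 {p G : ℕ} (θ : Param p G) : ℝ := θ.1

/-- mixture proportions π_j -/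
def wt {p G : ℕ} (θ : Param p G) : Fin G → ℝ := θ.2.1

/-- component means μ_j -/
def mean {p G : ℕ} (θ : Param p G) : Fin G → Fin p → ℝ := θ.2.2.1

/-- component covariance matrices Σ_j -/
def covm {p G : ℕ} (θ : Param p G) : Fin G → Matrix (Fin p) (Fin p) ℝ := θ.2.2.2

/-- the improper pseudo-density ψ_δ(x, θ) = π₀δ + Σ_j π_j φ(x; μ_j, Σ_j) -/
noncomputable def psi {p G : ℕ} (δ : ℝ) (θ : Param p G) (x : Fin p → ℝ) : ℝ :=
  pi0 θ * δ + ∑ j, wt θ j * gauss x (mean θ j) (covm θ j)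

/-- λ_min(θ): smallest eigenvalue among all component covariances -/
noncomputable def lamMinP {p G : ℕ} (θ : Param p G) : ℝ := ⨅ j, lamMin (covm θ j)

/-- λ_max(θ): largest eigenvalue among all component covariances -/
noncomputable def lamMaxP {p G : ℕ} (θ : Param p G) : ℝ := ⨆ j, lamMax (covm θ j)

/-- basic parameter constraints: proportions nonnegative summing to one,
positive definite covariances, eigenratio λ_max(θ)/λ_min(θ) ≤ γ -/
def baseOK {p G : ℕ} (γ : ℝ) (θ : Param p G) : Prop :=
  0 ≤ pi0 θ ∧ (∀ j, 0 ≤ wt θ j) ∧ pi0 θ + ∑ j, wt θ j = 1 ∧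
    (∀ j, (covm θ j).PosDef) ∧ lamMaxP θ ≤ γ * lamMinP θ

/-- the finite-sample constrained parameter space Θ (eigenratio bound and
estimated noise proportion (1/n) Σ_i τ₀(x_i, θ) ≤ π_max) -/
def ThetaN {p G n : ℕ} (δ γ πmax : ℝ) (x : Fin n → Fin p → ℝ) : Set (Param p G) :=
  {θ | baseOK γ θ ∧ (1 / n : ℝ) * ∑ i, pi0 θ * δ / psi δ θ (x i) ≤ πmax}

/-- the improper pseudo-log-likelihood l_n(θ) = (1/n) Σ_i log ψ_δ(x_i, θ) -/
noncomputable def ln {p G n : ℕ} (δ : ℝ) (x : Fin n → Fin p → ℝ) (θ : Param p G) : ℝ :=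
  (1 / n : ℝ) * ∑ i, Real.log (psi δ θ (x i))

open scoped MatrixOrder

namespace Matrix

variable {n : Type*} [Fintype n] [DecidableEq n]

lemma IsHermitian.mul_dotProduct_self_le {A : Matrix n n ℝ} (hA : A.IsHermitian) {c : ℝ}
    (hc : ∀ e ∈ spectrum ℝ A, c ≤ e) (v : n → ℝ) : c * (v ⬝ᵥ v) ≤ v ⬝ᵥ (A *ᵥ v) := by
  have hle : algebraMap ℝ (Matrix n n ℝ) c ≤ A :=
    (algebraMap_le_iff_le_spectrum hA.isSelfAdjoint).mpr hc
  have := (Matrix.le_iff.mp hle).dotProduct_mulVec_nonneg v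
  rw [star_trivial, sub_mulVec, dotProduct_sub, Algebra.algebraMap_eq_smul_one, smul_mulVec,
    one_mulVec, dotProduct_smul, smul_eq_mul] at this
  linarith

lemma PosDef.inv_le_of_mem_spectrum_inv {S : Matrix n n ℝ} (hS : S.PosDef) {b : ℝ}
    (hb : ∀ e ∈ spectrum ℝ S, e ≤ b) {e : ℝ} (he : e ∈ spectrum ℝ S⁻¹) : b⁻¹ ≤ e := by
  have hpos : ∀ e ∈ spectrum ℝ S, 0 < e := fun _ => hS.isStrictlyPositive.spectrum_pos
  rw [nonsing_inv_eq_ringInverse, ← cfc_ringInverse_id (R := ℝ) S hS.isUnit,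
    cfc_map_spectrum (p := IsSelfAdjoint) _ _ hS.isHermitian.isSelfAdjoint
      (continuousOn_inv₀.mono fun e he => (hpos e he).ne')] at he
  obtain ⟨e, he, rfl⟩ := he
  exact inv_anti₀ (hpos e he) (hb e he)

lemma PosDef.pow_card_le_det {S : Matrix n n ℝ} (hS : S.PosDef) {t : ℝ} (ht : 0 ≤ t)
    (h : ∀ e ∈ spectrum ℝ S, t ≤ e) : t ^ Fintype.card n ≤ S.det := by
  rw [hS.isHermitian.det_eq_prod_eigenvalues, ← Finset.card_univ, ← Finset.prod_const]
  exact Finset.prod_le_prod (fun _ _ => ht)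
    fun i _ => h _ (hS.isHermitian.eigenvalues_mem_spectrum_real i)

end Matrix

lemma sq_norm_le_dotProduct_self {ι : Type*} [Fintype ι] (v : ι → ℝ) : ‖v‖ ^ 2 ≤ v ⬝ᵥ v := by
  have hv : 0 ≤ v ⬝ᵥ v := Finset.sum_nonneg fun i _ => mul_self_nonneg (v i)
  refine (Real.le_sqrt (norm_nonneg v) hv).mp ((pi_norm_le_iff_of_nonneg (Real.sqrt_nonneg _)).mpr
    fun i => ?_)
  rw [Real.norm_eq_abs]
  have hi := Finset.single_le_sum (fun j _ => mul_self_nonneg (v j)) (Finset.mem_univ i)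
  exact Real.abs_le_sqrt (by simpa [sq, dotProduct] using hi)

-- the density of `N(μ, t • 1)` at its mean
noncomputable def gaussPeak (p : ℕ) (t : ℝ) : ℝ := (2 * π) ^ (-(p : ℝ) / 2) * t ^ (-(p : ℝ) / 2)

section Gaussian

variable {p : ℕ}

lemma gaussPeak_pos {t : ℝ} (ht : 0 < t) : 0 < gaussPeak p t := by
  unfold gaussPeak
  positivity

lemma gaussPeak_eq_mul_inv_rpow {t : ℝ} (ht : 0 < t) :
    gaussPeak p t = (2 * π) ^ (-(p : ℝ) / 2) * t⁻¹ ^ ((p : ℝ) / 2) := by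
  rw [gaussPeak, Real.inv_rpow ht.le, ← Real.rpow_neg ht.le, neg_div]

lemma det_rpow_neg_half_le {S : Matrix (Fin p) (Fin p) ℝ} (hS : S.PosDef) {t : ℝ} (ht : 0 < t)
    (hlo : ∀ e ∈ spectrum ℝ S, t ≤ e) : S.det ^ (-(1 : ℝ) / 2) ≤ t ^ (-(p : ℝ) / 2) := by
  have hdet : t ^ p ≤ S.det := by simpa using hS.pow_card_le_det ht.le hlo
  calc S.det ^ (-(1 : ℝ) / 2) ≤ (t ^ p) ^ (-(1 : ℝ) / 2) :=
        Real.rpow_le_rpow_of_nonpos (pow_pos ht p) hdet (by norm_num)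
    _ = t ^ (-(p : ℝ) / 2) := by
        rw [← Real.rpow_natCast, ← Real.rpow_mul ht.le]
        ring_nf

lemma gauss_le {S : Matrix (Fin p) (Fin p) ℝ} (hS : S.PosDef) {t b : ℝ} (ht : 0 < t)
    (hlo : ∀ e ∈ spectrum ℝ S, t ≤ e) (hhi : ∀ e ∈ spectrum ℝ S, e ≤ b) (x μ : Fin p → ℝ) :
    gauss x μ S ≤ gaussPeak p t * Real.exp (-(b⁻¹ * ((x - μ) ⬝ᵥ (x - μ))) / 2) := by
  have hq := hS.inv.isHermitian.mul_dotProduct_self_le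
    (fun _ he => hS.inv_le_of_mem_spectrum_inv hhi he) (x - μ)
  have hdet := det_rpow_neg_half_le hS ht hlo
  unfold gauss gaussPeak
  gcongr

lemma gauss_pos {S : Matrix (Fin p) (Fin p) ℝ} (hS : S.PosDef) (x μ : Fin p → ℝ) :
    0 < gauss x μ S := by
  have := hS.det_pos
  unfold gauss
  positivity

end Gaussian

section Separation

open Finset

variable {ι κ E : Type*}

lemma exists_pos_le_dist_of_ne [MetricSpace E] [Finite ι] (x : ι → E) :
    ∃ d > 0, ∀ i j, x i ≠ x j → d ≤ dist (x i) (x j) := by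
  rcases isEmpty_or_nonempty {q : ι × ι // x q.1 ≠ x q.2} with h | h
  · exact ⟨1, one_pos, fun i j hij => (h.false ⟨(i, j), hij⟩).elim⟩
  · obtain ⟨q, hq⟩ := Finite.exists_min fun q : {q : ι × ι // x q.1 ≠ x q.2} =>
      dist (x q.1.1) (x q.1.2)
    exact ⟨_, dist_pos.mpr q.2, fun i j hij => hq ⟨(i, j), hij⟩⟩

lemma ncard_range_le_card_add_card_far [PseudoMetricSpace E] [Fintype ι] [Fintype κ]
    (x : ι → E) (μ : κ → E) {ε : ℝ} (hsep : ∀ i j, x i ≠ x j → 2 * ε ≤ dist (x i) (x j)) :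
    (Set.range x).ncard ≤ Fintype.card κ + #{i | ∀ k, ε ≤ dist (x i) (μ k)} := by
  classical
  have hnear : ∀ k, #(({i | dist (x i) (μ k) < ε} : Finset ι).image x) ≤ 1 := by
    refine fun k => card_le_one.mpr ?_
    simp only [mem_image, mem_filter, mem_univ, true_and]
    rintro _ ⟨i, hi, rfl⟩ _ ⟨j, hj, rfl⟩
    by_contra hij
    have := dist_triangle_right (x i) (x j) (μ k)
    linarith [hsep i j hij]
  have hcover : univ.image x ⊆ ({i | ∀ k, ε ≤ dist (x i) (μ k)} : Finset ι).image x ∪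
      univ.biUnion fun k => ({i | dist (x i) (μ k) < ε} : Finset ι).image x := by
    rintro _ hv
    obtain ⟨i, -, rfl⟩ := mem_image.mp hv
    by_cases hfar : ∀ k, ε ≤ dist (x i) (μ k)
    · exact mem_union_left _ (mem_image_of_mem x (by simpa using hfar))
    · push Not at hfar
      obtain ⟨k, hk⟩ := hfar
      exact mem_union_right _
        (mem_biUnion.mpr ⟨k, mem_univ k, mem_image_of_mem x (by simpa using hk)⟩)
  calc (Set.range x).ncard = #(univ.image x) := by
        rw [← Set.ncard_coe_finset, coe_image, coe_univ, Set.image_univ]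
    _ ≤ #(({i | ∀ k, ε ≤ dist (x i) (μ k)} : Finset ι).image x) +
        #(univ.biUnion fun k => ({i | dist (x i) (μ k) < ε} : Finset ι).image x) :=
      (card_le_card hcover).trans (card_union_le _ _)
    _ ≤ #{i | ∀ k, ε ≤ dist (x i) (μ k)} + ∑ _k : κ, 1 :=
      add_le_add card_image_le (card_biUnion_le.trans (sum_le_sum fun k _ => hnear k))
    _ = Fintype.card κ + #{i | ∀ k, ε ≤ dist (x i) (μ k)} := by simp [add_comm]

lemma exists_finset_far_of_ncard_range [PseudoMetricSpace E] [Fintype ι] [Fintype κ]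
    (x : ι → E) (μ : κ → E) {ε M : ℝ} (hsep : ∀ i j, x i ≠ x j → 2 * ε ≤ dist (x i) (x j))
    (hcard : Fintype.card κ + ⌈M⌉₊ < (Set.range x).ncard) :
    ∃ F : Finset ι, (∀ i ∈ F, ∀ k, ε ≤ dist (x i) (μ k)) ∧ M + 1 ≤ #F := by
  have hceil : M + 1 ≤ ((⌈M⌉₊ + 1 : ℕ) : ℝ) := by
    push_cast
    linarith [Nat.le_ceil M]
  exact ⟨_, fun i hi => by simpa using hi, hceil.trans (Nat.cast_le.mpr
    (Nat.lt_of_add_lt_add_left (hcard.trans_le (ncard_range_le_card_add_card_far x μ hsep))))⟩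

end Separation

section Inequalities

open Finset

variable {ι : Type*} [Fintype ι]

lemma le_mul_of_sum_div_le {ψ : ι → ℝ} {F : Finset ι} {a s M : ℝ} (ha : 0 ≤ a) (hs : 0 < s)
    (hψ : ∀ i, 0 < ψ i) (hF : ∀ i ∈ F, ψ i ≤ a + s) (hcard : M + 1 ≤ #F)
    (hsum : ∑ i, a / ψ i ≤ M) : a ≤ M * s := by
  have has : 0 < a + s := by linarith
  have key : (M + 1) * (a / (a + s)) ≤ M := calc
    (M + 1) * (a / (a + s)) ≤ #F * (a / (a + s)) :=
        mul_le_mul_of_nonneg_right hcard (div_nonneg ha has.le)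
    _ = ∑ i ∈ F, a / (a + s) := by rw [sum_const, nsmul_eq_mul]
    _ ≤ ∑ i ∈ F, a / ψ i := sum_le_sum fun i hi => div_le_div_of_nonneg_left ha (hψ i) (hF i hi)
    _ ≤ ∑ i, a / ψ i :=
        sum_le_sum_of_subset_of_nonneg (subset_univ F) fun i _ _ => div_nonneg ha (hψ i).le
    _ ≤ M := hsum
  rw [mul_div_assoc', div_le_iff₀ has] at key
  linarith

lemma sum_log_le {ψ : ι → ℝ} {F : Finset ι} {α r R : ℝ} (hψ : ∀ i, 0 < ψ i) (hα : α ≤ #F)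
    (hr₀ : 0 ≤ r) (hr₁ : r ≤ 1) (hF : ∀ i ∈ F, ψ i ≤ r) (hR₁ : 1 ≤ R) (hR : ∀ i, ψ i ≤ R) :
    ∑ i, Real.log (ψ i) ≤ α * Real.log r + Fintype.card ι * Real.log R := by
  classical
  have hnear : ∑ i ∈ F, Real.log (ψ i) ≤ α * Real.log r := calc
    _ ≤ ∑ _i ∈ F, Real.log r := sum_le_sum fun i hi => Real.log_le_log (hψ i) (hF i hi)
    _ = #F * Real.log r := by rw [sum_const, nsmul_eq_mul]
    _ ≤ α * Real.log r := mul_le_mul_of_nonpos_right hα (Real.log_nonpos hr₀ hr₁)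
  have hrest : ∑ i ∈ Fᶜ, Real.log (ψ i) ≤ Fintype.card ι * Real.log R := calc
    _ ≤ ∑ _i ∈ Fᶜ, Real.log R := sum_le_sum fun i _ => Real.log_le_log (hψ i) (hR i)
    _ = #Fᶜ * Real.log R := by rw [sum_const, nsmul_eq_mul]
    _ ≤ Fintype.card ι * Real.log R :=
        mul_le_mul_of_nonneg_right (by exact_mod_cast card_le_univ Fᶜ) (Real.log_nonneg hR₁)
  rw [← sum_add_sum_compl F]
  linarith

end Inequalities

noncomputable def gaussTail (p : ℕ) (κ t : ℝ) : ℝ := gaussPeak p t * Real.exp (-(κ / t))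

section Asymptotics

lemma tendsto_add_mul_log_sub_mul_atTop_atBot (K₀ K₁ : ℝ) {A : ℝ} (hA : 0 < A) :
    Tendsto (fun u => K₀ + K₁ * Real.log u - A * u) atTop atBot := by
  have hlog : Tendsto (fun u => K₁ * (Real.log u / u) - A) atTop (𝓝 (-A)) := by
    have := (Real.tendsto_pow_log_div_mul_add_atTop 1 0 1 one_ne_zero).const_mul K₁
    simpa using this.sub_const A
  refine (tendsto_atBot_add_const_left _ K₀
    (tendsto_id.atTop_mul_neg (neg_lt_zero.mpr hA) hlog)).congr' ?_
  filter_upwards [eventually_gt_atTop 0] with u hu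
  simp only [id]
  field_simp
  ring

variable {p : ℕ}

lemma tendsto_gaussPeak_nhdsGT_zero (hp : 0 < p) : Tendsto (gaussPeak p) (𝓝[>] 0) atTop := by
  have hc : (0 : ℝ) < (2 * π) ^ (-(p : ℝ) / 2) := by positivity
  refine (((tendsto_rpow_atTop (y := (p : ℝ) / 2) (by positivity)).comp
    tendsto_inv_nhdsGT_zero).const_mul_atTop hc).congr' ?_
  filter_upwards [self_mem_nhdsWithin] with t ht
  exact (gaussPeak_eq_mul_inv_rpow ht).symm

lemma tendsto_gaussTail_nhdsGT_zero {κ : ℝ} (hκ : 0 < κ) :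
    Tendsto (gaussTail p κ) (𝓝[>] 0) (𝓝 0) := by
  have := ((tendsto_rpow_mul_exp_neg_mul_atTop_nhds_zero ((p : ℝ) / 2) κ hκ).comp
    tendsto_inv_nhdsGT_zero).const_mul ((2 * π) ^ (-(p : ℝ) / 2))
  rw [mul_zero] at this
  refine this.congr' ?_
  filter_upwards [self_mem_nhdsWithin] with t ht
  simp only [Function.comp, gaussTail, gaussPeak_eq_mul_inv_rpow ht, div_eq_mul_inv]
  ring_nf

lemma eventually_mul_gaussTail_le_one_and_one_le_add_gaussPeak (hp : 0 < p) (α : ℝ) {κ : ℝ}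
    (hκ : 0 < κ) (δ : ℝ) : ∀ᶠ t in 𝓝[>] 0, α * gaussTail p κ t ≤ 1 ∧ 1 ≤ δ + gaussPeak p t := by
  have htail := (tendsto_gaussTail_nhdsGT_zero (p := p) hκ).const_mul α
  rw [mul_zero] at htail
  exact (htail.eventually_le_const one_pos).and
    ((tendsto_gaussPeak_nhdsGT_zero hp).eventually_ge_atTop (1 - δ) |>.mono fun t h => by linarith)

-- For `t ≤ 1` the expression is at most `K₀ + K₁ log t⁻¹ - ακ t⁻¹`.
lemma tendsto_mul_log_gaussTail_add_mul_log_gaussPeak {α κ δ N : ℝ} (hα : 0 < α) (hκ : 0 < κ)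
    (hδ : 0 < δ) (hN : 0 ≤ N) :
    Tendsto (fun t => α * Real.log (α * gaussTail p κ t) + N * Real.log (δ + gaussPeak p t))
      (𝓝[>] 0) atBot := by
  set c : ℝ := (2 * π) ^ (-(p : ℝ) / 2)
  have hc : 0 < c := by positivity
  set q : ℝ := (p : ℝ) / 2
  refine tendsto_atBot_mono' _ ?_ ((tendsto_add_mul_log_sub_mul_atTop_atBot
    (α * (Real.log α + Real.log c) + N * Real.log (δ + c)) ((α + N) * q)
    (mul_pos hα hκ)).comp tendsto_inv_nhdsGT_zero)
  filter_upwards [Ioo_mem_nhdsGT one_pos] with t ⟨ht₀, ht₁⟩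
  set u := t⁻¹
  have hu : 0 < u := inv_pos.mpr ht₀
  have huq : 0 < u ^ q := Real.rpow_pos_of_pos hu q
  have htail :
      Real.log (α * gaussTail p κ t) = Real.log α + Real.log c + q * Real.log u - κ * u := by
    rw [gaussTail, gaussPeak_eq_mul_inv_rpow ht₀, Real.log_mul hα.ne' (by positivity),
      Real.log_mul (by positivity) (Real.exp_pos _).ne', Real.log_mul hc.ne' huq.ne',
      Real.log_exp, Real.log_rpow hu, div_eq_mul_inv]
    ring
  have hpeak : Real.log (δ + gaussPeak p t) ≤ Real.log (δ + c) + q * Real.log u := by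
    have h1 : 1 ≤ u ^ q := Real.one_le_rpow (one_le_inv₀ ht₀ |>.mpr ht₁.le) (by positivity)
    rw [← Real.log_rpow hu, ← Real.log_mul (by positivity) huq.ne']
    refine Real.log_le_log (by positivity [gaussPeak_pos (p := p) ht₀]) ?_
    rw [gaussPeak_eq_mul_inv_rpow ht₀]
    nlinarith
  simp only [Function.comp]
  rw [htail]
  nlinarith [mul_le_mul_of_nonneg_left hpeak hN]

end Asymptotics

section ParameterSpace

variable {p G : ℕ}

lemma lamMin_le_of_mem_spectrum {A : Matrix (Fin p) (Fin p) ℝ} {e : ℝ}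
    (he : e ∈ spectrum ℝ A) : lamMin A ≤ e :=
  csInf_le A.finite_real_spectrum.bddBelow he

lemma le_lamMax_of_mem_spectrum {A : Matrix (Fin p) (Fin p) ℝ} {e : ℝ}
    (he : e ∈ spectrum ℝ A) : e ≤ lamMax A :=
  le_csSup A.finite_real_spectrum.bddAbove he

lemma lamMin_pos (hp : 0 < p) {A : Matrix (Fin p) (Fin p) ℝ} (hA : A.PosDef) : 0 < lamMin A :=
  hA.isStrictlyPositive.spectrum_pos <| Set.Nonempty.csInf_mem
    ⟨_, hA.isHermitian.eigenvalues_mem_spectrum_real ⟨0, hp⟩⟩ A.finite_real_spectrum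

namespace baseOK

variable {γ : ℝ} {θ : Param p G}

lemma lamMinP_pos [Nonempty (Fin G)] (h : baseOK γ θ) (hp : 0 < p) : 0 < lamMinP θ := by
  obtain ⟨k, hk⟩ := exists_eq_ciInf_of_finite (f := fun k => lamMin (covm θ k))
  rw [lamMinP, ← hk]
  exact lamMin_pos hp (h.2.2.2.1 k)

lemma mem_spectrum_bounds (h : baseOK γ θ) (k : Fin G) {e : ℝ}
    (he : e ∈ spectrum ℝ (covm θ k)) : lamMinP θ ≤ e ∧ e ≤ γ * lamMinP θ :=
  ⟨(ciInf_le (Set.finite_range _).bddBelow k).trans (lamMin_le_of_mem_spectrum he),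
    (le_lamMax_of_mem_spectrum he).trans
      ((le_ciSup (Set.finite_range _).bddAbove k).trans h.2.2.2.2)⟩

lemma gauss_le [Nonempty (Fin G)] (h : baseOK γ θ) (hp : 0 < p) (k : Fin G) (y : Fin p → ℝ) :
    gauss y (mean θ k) (covm θ k) ≤ gaussPeak p (lamMinP θ) *
      Real.exp (-((γ * lamMinP θ)⁻¹ * ((y - mean θ k) ⬝ᵥ (y - mean θ k))) / 2) :=
  _root_.gauss_le (h.2.2.2.1 k) (h.lamMinP_pos hp) (fun _ he => (h.mem_spectrum_bounds k he).1)
    (fun _ he => (h.mem_spectrum_bounds k he).2) y _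

lemma gauss_le_gaussPeak [Nonempty (Fin G)] (h : baseOK γ θ) (hp : 0 < p) (hγ : 0 < γ)
    (k : Fin G) (y : Fin p → ℝ) : gauss y (mean θ k) (covm θ k) ≤ gaussPeak p (lamMinP θ) := by
  refine (h.gauss_le hp k y).trans (mul_le_of_le_one_right (gaussPeak_pos (h.lamMinP_pos hp)).le ?_)
  have hv := (sq_nonneg _).trans (sq_norm_le_dotProduct_self (y - mean θ k))
  have := h.lamMinP_pos hp
  rw [Real.exp_le_one_iff, neg_div, neg_nonpos]
  exact div_nonneg (mul_nonneg (by positivity) hv) zero_le_two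

lemma gauss_le_gaussTail [Nonempty (Fin G)] (h : baseOK γ θ) (hp : 0 < p) (hγ : 0 < γ) {ε : ℝ}
    (hε : 0 ≤ ε) {k : Fin G} {y : Fin p → ℝ} (hy : ε ≤ dist y (mean θ k)) :
    gauss y (mean θ k) (covm θ k) ≤ gaussTail p (ε ^ 2 / (2 * γ)) (lamMinP θ) := by
  have ht := h.lamMinP_pos hp
  have hsq : ε ^ 2 ≤ (y - mean θ k) ⬝ᵥ (y - mean θ k) :=
    (pow_le_pow_left₀ hε (by rwa [← dist_eq_norm]) 2).trans (sq_norm_le_dotProduct_self _)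
  refine (h.gauss_le hp k y).trans ?_
  refine mul_le_mul_of_nonneg_left (Real.exp_le_exp.mpr ?_) (gaussPeak_pos ht).le
  calc -((γ * lamMinP θ)⁻¹ * ((y - mean θ k) ⬝ᵥ (y - mean θ k))) / 2
      ≤ -((γ * lamMinP θ)⁻¹ * ε ^ 2) / 2 := by gcongr
    _ = -(ε ^ 2 / (2 * γ) / lamMinP θ) := by ring

lemma psi_pos (h : baseOK γ θ) {δ : ℝ} (hδ : 0 < δ) (y : Fin p → ℝ) : 0 < psi δ θ y := by
  obtain ⟨hπ₀, hwt, hsum, hpd, -⟩ := h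
  have hterm : ∀ k, 0 ≤ wt θ k * gauss y (mean θ k) (covm θ k) :=
    fun k => mul_nonneg (hwt k) (gauss_pos (hpd k) _ _).le
  rcases hπ₀.lt_or_eq with hπ | hπ
  · exact add_pos_of_pos_of_nonneg (mul_pos hπ hδ) (Finset.sum_nonneg fun k _ => hterm k)
  · obtain ⟨k, -, hk⟩ : ∃ k ∈ Finset.univ, (0 : Fin G → ℝ) k < wt θ k :=
      Finset.exists_lt_of_sum_lt (by rw [← hπ, zero_add] at hsum; simp [hsum])
    exact add_pos_of_nonneg_of_pos (mul_nonneg hπ₀ hδ.le) (Finset.sum_pos' (fun k _ => hterm k)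
      ⟨k, Finset.mem_univ k, mul_pos hk (gauss_pos (hpd k) _ _)⟩)

lemma psi_le (h : baseOK γ θ) {δ s : ℝ} {y : Fin p → ℝ} (hs : 0 ≤ s)
    (hg : ∀ k, gauss y (mean θ k) (covm θ k) ≤ s) : psi δ θ y ≤ pi0 θ * δ + s := by
  obtain ⟨hπ₀, hwt, hsum, -, -⟩ := h
  calc psi δ θ y ≤ pi0 θ * δ + ∑ k, wt θ k * s := by
        unfold psi
        gcongr with k
        exacts [hwt k, hg k]
    _ ≤ pi0 θ * δ + s := by
        rw [← Finset.sum_mul]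
        nlinarith

end baseOK

end ParameterSpace

lemma tendsto_lamMinP_nhdsGT_zero {p G : ℕ} [Nonempty (Fin G)] (hp : 0 < p) {γ : ℝ}
    {θ : ℕ → Param p G} (hθ : ∀ m, baseOK γ (θ m)) {j : Fin G} {lam : ℕ → ℝ}
    (hmem : ∀ m, lam m ∈ spectrum ℝ (covm (θ m) j)) (hto : Tendsto lam atTop (𝓝 0)) :
    Tendsto (fun m => lamMinP (θ m)) atTop (𝓝[>] 0) :=
  tendsto_nhdsWithin_of_tendsto_nhds_of_eventually_within _
    (tendsto_of_tendsto_of_tendsto_of_le_of_le tendsto_const_nhds hto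
      (fun m => ((hθ m).lamMinP_pos hp).le) fun m => ((hθ m).mem_spectrum_bounds j (hmem m)).1)
    (Eventually.of_forall fun m => (hθ m).lamMinP_pos hp)

lemma sum_log_psi_le_of_mem_ThetaN {p G n : ℕ} [Nonempty (Fin G)] (hp : 0 < p) (hn : 0 < n)
    {δ γ πmax ε : ℝ} (hδ : 0 < δ) (hγ : 0 < γ) (hπ : 0 ≤ πmax) (hε : 0 ≤ ε) {x : Fin n → Fin p → ℝ}
    {θ : Param p G} (hθ : θ ∈ ThetaN δ γ πmax x) {F : Finset (Fin n)}
    (hFfar : ∀ i ∈ F, ∀ k, ε ≤ dist (x i) (mean θ k)) (hF : n * πmax + 1 ≤ F.card)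
    (htail : (n * πmax + 1) * gaussTail p (ε ^ 2 / (2 * γ)) (lamMinP θ) ≤ 1)
    (hpeak : 1 ≤ δ + gaussPeak p (lamMinP θ)) :
    ∑ i, Real.log (psi δ θ (x i)) ≤
      (n * πmax + 1) * Real.log ((n * πmax + 1) * gaussTail p (ε ^ 2 / (2 * γ)) (lamMinP θ)) +
        n * Real.log (δ + gaussPeak p (lamMinP θ)) := by
  obtain ⟨hbase, hnoise⟩ := hθ
  set s := gaussTail p (ε ^ 2 / (2 * γ)) (lamMinP θ)
  have ht := hbase.lamMinP_pos hp
  have hs : 0 < s := mul_pos (gaussPeak_pos ht) (Real.exp_pos _)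
  have hψ : ∀ i, 0 < psi δ θ (x i) := fun i => hbase.psi_pos hδ (x i)
  have hfar : ∀ i ∈ F, psi δ θ (x i) ≤ pi0 θ * δ + s := fun i hi =>
    hbase.psi_le hs.le fun k => hbase.gauss_le_gaussTail hp hγ hε (hFfar i hi k)
  have hsum : ∑ i, pi0 θ * δ / psi δ θ (x i) ≤ n * πmax := by
    rwa [one_div, inv_mul_le_iff₀ (by exact_mod_cast hn)] at hnoise
  have hπ₀δ : pi0 θ * δ ≤ n * πmax * s :=
    le_mul_of_sum_div_le (mul_nonneg hbase.1 hδ.le) hs hψ hfar hF hsum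
  have hπ₀ : pi0 θ ≤ 1 := by
    linarith [hbase.2.2.1, Finset.sum_nonneg fun k (_ : k ∈ Finset.univ) => hbase.2.1 k]
  have hany : ∀ i, psi δ θ (x i) ≤ δ + gaussPeak p (lamMinP θ) := fun i =>
    (hbase.psi_le (gaussPeak_pos ht).le fun k => hbase.gauss_le_gaussPeak hp hγ k (x i)).trans
      (by nlinarith)
  simpa using sum_log_le hψ hF (by positivity) htail (fun i hi => (hfar i hi).trans (by linarith))
    hpeak hany

theorem stmt9_general {p G n : ℕ} (hp : 0 < p) (hG : 0 < G) (hn : 0 < n)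
    (δ γ πmax : ℝ) (hδ : 0 < δ) (hγ : 1 ≤ γ) (hπ0 : 0 < πmax)
    (x : Fin n → Fin p → ℝ)
    (hcard : G + Nat.ceil ((n : ℝ) * πmax) < (Set.range x).ncard)
    (θ : ℕ → Param p G) (hθ : ∀ m, θ m ∈ ThetaN δ γ πmax x)
    (j : Fin G) (lam : ℕ → ℝ)
    (hmem : ∀ m, lam m ∈ spectrum ℝ (covm (θ m) j))
    (hto : Tendsto lam atTop (nhds 0)) :
    Tendsto (fun m => ln δ x (θ m)) atTop atBot := by
  have : Nonempty (Fin G) := ⟨⟨0, hG⟩⟩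
  have hγ₀ : 0 < γ := one_pos.trans_le hγ
  have ht := tendsto_lamMinP_nhdsGT_zero hp (fun m => (hθ m).1) hmem hto
  obtain ⟨d, hd, hsep⟩ := exists_pos_le_dist_of_ne x
  have hev := eventually_mul_gaussTail_le_one_and_one_le_add_gaussPeak hp (n * πmax + 1)
    (κ := (d / 2) ^ 2 / (2 * γ)) (by positivity) δ
  refine tendsto_atBot_mono' _ ((ht.eventually hev).mono fun m h => ?_)
    (((tendsto_mul_log_gaussTail_add_mul_log_gaussPeak (p := p) (α := n * πmax + 1)
      (κ := (d / 2) ^ 2 / (2 * γ)) (by positivity) (by positivity) hδ (Nat.cast_nonneg n)).comp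
      ht).const_mul_atBot (by positivity : (0 : ℝ) < 1 / n))
  obtain ⟨F, hFfar, hF⟩ := exists_finset_far_of_ncard_range x (mean (θ m)) (ε := d / 2)
    (fun i j hij => by simpa [mul_div_cancel₀] using hsep i j hij) (by simpa using hcard)
  exact mul_le_mul_of_nonneg_left (sum_log_psi_le_of_mem_ThetaN hp hn hδ hγ₀ hπ0.le
    (by positivity) (hθ m) hFfar hF h.1 h.2) (by positivity)

/-- Lemma 2 of the paper: for δ > 0, with more than G + ⌈nπ_max⌉ distinct
data points, if along a sequence in the RIMLE constrained parameter space Θ some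
covariance eigenvalue tends to 0, the improper pseudo-log-likelihood tends to -∞. -/
theorem stmt9 {p G n : ℕ} (hp : 0 < p) (hG : 0 < G) (hn : 0 < n)
    (δ γ πmax : ℝ) (hδ : 0 < δ) (hγ : 1 ≤ γ) (hπ0 : 0 < πmax) (hπ1 : πmax < 1)
    (x : Fin n → Fin p → ℝ)
    (hcard : G + Nat.ceil ((n : ℝ) * πmax) < (Set.range x).ncard)
    (θ : ℕ → Param p G) (hθ : ∀ m, θ m ∈ ThetaN δ γ πmax x)
    (j : Fin G) (lam : ℕ → ℝ)
    (hmem : ∀ m, lam m ∈ spectrum ℝ (covm (θ m) j))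
    (hto : Tendsto lam atTop (nhds 0)) :
    Tendsto (fun m => ln δ x (θ m)) atTop atBot :=
  stmt9_general hp hG hn δ γ πmax hδ hγ hπ0 x hcard θ hθ j lam hmem hto
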